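/- For every nonnegative integer n and every real number x, 𝔠_{n+1}(x) = x · ∑_{k=0}^{⌊n/2⌋} 4^{−k} · binom(n+1, 2k+1) · 𝔠_{n−2k}(x). -/

import Mathlib

/-!
`k! T(n,k)` is the `k`-th central difference `δᵏ` of `r ↦ rⁿ` at `0`, where
`δ f(r) = f(r + 1/2) - f(r - 1/2)`; equivalently, the `k`-th forward difference at `-k/2`.
Applying one `δ` to `r ↦ r^(n+1)` leaves only the odd binomial terms,
`(r + 1/2)^(n+1) - (r - 1/2)^(n+1) = ∑ₖ 4⁻ᵏ C(n+1, 2k+1) r^(n-2k)`, which gives a recursion for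
`(m+1)! T(n+1, m+1)` in terms of the `m! T(n-2k, m)`. Multiplying by `x^(m+1)` and summing over
`m` gives the identity, because `T(n, m) = 0` for `m > n` and `T(n+1, 0) = 0`.
-/

open Nat Finset

/-- Central factorial numbers of the second kind. -/
noncomputable def centralT (n k : ℕ) : ℝ :=
  (1 / (k ! : ℝ)) * ∑ j ∈ Finset.range (k + 1),
    (-1 : ℝ) ^ j * (k.choose j : ℝ) * ((k : ℝ) / 2 - (j : ℝ)) ^ n

/-- Central Fubini-like polynomials. -/
noncomputable def centralFubini (n : ℕ) (x : ℝ) : ℝ :=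
  ∑ k ∈ Finset.range (n + 1), (k ! : ℝ) * centralT n k * x ^ k

open fwdDiff

theorem add_pow_sub_sub_pow {R : Type*} [CommRing R] (a b : R) (n : ℕ) :
    (a + b) ^ (n + 1) - (a - b) ^ (n + 1) =
      2 * ∑ k ∈ range (n / 2 + 1),
        b ^ (2 * k + 1) * a ^ (n - 2 * k) * (n + 1).choose (2 * k + 1) := by
  rw [sub_eq_add_neg a b, add_comm a, add_comm a, add_pow, add_pow, ← sum_sub_distrib, mul_sum]
  have hodd : (range (n / 2 + 1)).image (fun k ↦ 2 * k + 1) ⊆ range (n + 2) := by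
    intro i hi
    simp only [mem_image, mem_range] at hi ⊢
    omega
  rw [← sum_subset hodd, sum_image (by intro k _ l _ h; simp only at h; omega)]
  · refine sum_congr rfl fun k _ ↦ ?_
    rw [(odd_two_mul_add_one k).neg_pow, show n + 1 - (2 * k + 1) = n - 2 * k by omega]
    ring
  · intro i hi hi_odd
    have : Even i := by
      rw [← Nat.not_odd_iff_even]
      rintro ⟨k, rfl⟩
      exact hi_odd (mem_image.2 ⟨k, by rw [mem_range] at hi ⊢; omega, rfl⟩)
    rw [this.neg_pow, sub_self]

theorem factorial_mul_centralT (n k : ℕ) :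
    (k ! : ℝ) * centralT n k = (Δ_[1])^[k] (fun r : ℝ ↦ r ^ n) (-(k / 2)) := by
  rw [centralT, ← mul_assoc, mul_one_div_cancel (by positivity), one_mul,
    fwdDiff_iter_eq_sum_shift, ← sum_range_reflect]
  refine sum_congr rfl fun j hj ↦ ?_
  have hjk : j ≤ k := Nat.lt_succ_iff.1 (mem_range.1 hj)
  rw [add_tsub_cancel_right, Nat.choose_symm hjk, Nat.cast_sub hjk, zsmul_eq_mul]
  push_cast
  ring

theorem centralT_eq_zero_of_lt {n k : ℕ} (h : n < k) : centralT n k = 0 := by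
  have := factorial_mul_centralT n k
  rw [fwdDiff_iter_pow_eq_zero_of_lt h] at this
  exact (mul_eq_zero.1 this).resolve_left (by positivity)

theorem centralT_succ_zero (n : ℕ) : centralT (n + 1) 0 = 0 := by
  simp [centralT]

theorem add_half_pow_sub_sub_half_pow (a : ℝ) (n : ℕ) :
    (a + 1 / 2) ^ (n + 1) - (a - 1 / 2) ^ (n + 1) =
      ∑ k ∈ range (n / 2 + 1),
        ((4 : ℝ) ^ k)⁻¹ * (n + 1).choose (2 * k + 1) * a ^ (n - 2 * k) := by
  rw [add_pow_sub_sub_pow, mul_sum]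
  refine sum_congr rfl fun k _ ↦ ?_
  have : (2 : ℝ) * (1 / 2) ^ (2 * k + 1) = ((4 : ℝ) ^ k)⁻¹ := by
    rw [pow_succ, pow_mul, ← inv_pow]
    norm_num
    ring
  rw [← this]
  ring

theorem factorial_mul_centralT_succ_succ (n m : ℕ) :
    ((m + 1)! : ℝ) * centralT (n + 1) (m + 1) =
      ∑ k ∈ range (n / 2 + 1),
        ((4 : ℝ) ^ k)⁻¹ * (n + 1).choose (2 * k + 1) *
          ((m ! : ℝ) * centralT (n - 2 * k) m) := by
  set g : ℝ → ℝ := ∑ k ∈ range (n / 2 + 1),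
    (((4 : ℝ) ^ k)⁻¹ * (n + 1).choose (2 * k + 1)) • fun s ↦ s ^ (n - 2 * k)
  have hdiff : Δ_[1] (fun r : ℝ ↦ r ^ (n + 1)) = fun r ↦ g (r + 1 / 2) := by
    funext r
    simp only [fwdDiff, g, Finset.sum_apply, Pi.smul_apply, smul_eq_mul]
    rw [← add_half_pow_sub_sub_half_pow]
    ring
  have hpoint : -(((m + 1 : ℕ) : ℝ) / 2) + 1 / 2 = -(m / 2) := by
    push_cast
    ring
  rw [factorial_mul_centralT, Function.iterate_succ_apply, hdiff, fwdDiff_iter_comp_add, hpoint,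
    fwdDiff_iter_finsetSum, Finset.sum_apply]
  refine sum_congr rfl fun k _ ↦ ?_
  rw [fwdDiff_iter_const_smul, Pi.smul_apply, smul_eq_mul, factorial_mul_centralT]

theorem centralFubini_eq_sum_range_of_le {n N : ℕ} (h : n ≤ N) (x : ℝ) :
    centralFubini n x = ∑ m ∈ range (N + 1), (m ! : ℝ) * centralT n m * x ^ m := by
  refine sum_subset (range_subset_range.2 (by omega)) fun m _ hm ↦ ?_
  rw [centralT_eq_zero_of_lt (by simpa using hm), mul_zero, zero_mul]

theorem central_fubini_odd_convolution (n : ℕ) (x : ℝ) :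
    centralFubini (n + 1) x =
      x * ∑ k ∈ Finset.range (n / 2 + 1),
        ((4 : ℝ) ^ k)⁻¹ * ((n + 1).choose (2 * k + 1) : ℝ) * centralFubini (n - 2 * k) x := by
  calc centralFubini (n + 1) x
      = ∑ m ∈ range (n + 1), ((m + 1)! : ℝ) * centralT (n + 1) (m + 1) * x ^ (m + 1) := by
        rw [centralFubini, sum_range_succ', centralT_succ_zero, mul_zero, zero_mul, add_zero]
    _ = ∑ m ∈ range (n + 1), x * ∑ k ∈ range (n / 2 + 1), ((4 : ℝ) ^ k)⁻¹ *
          (n + 1).choose (2 * k + 1) * ((m ! : ℝ) * centralT (n - 2 * k) m * x ^ m) := by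
        refine sum_congr rfl fun m _ ↦ ?_
        rw [factorial_mul_centralT_succ_succ, sum_mul, mul_sum]
        exact sum_congr rfl fun k _ ↦ by ring
    _ = _ := by
        rw [← mul_sum, sum_comm]
        refine congrArg (x * ·) (sum_congr rfl fun k _ ↦ ?_)
        rw [centralFubini_eq_sum_range_of_le (n.sub_le (2 * k)), mul_sum]
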